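/- For every integer n ≥ 1, let Z_n := ({0, 8, …, 8n} × {0}) ∪ ({4, 12, …, 8n−4} × {4}) ⊆ ℝ × [0,4], equipped with the l¹ metric. If f : Z_n → ℝ is an ε-roughly isometric map, then ε ≥ 8n/(2n+1). -/

import Mathlib

open Metric Set
open scoped ENNReal

/-- `f` is `ε`-roughly isometric: `|d(f x, f x') − d(x, x')| ≤ ε` for all `x, x'`. -/
def RoughIsom {X Y : Type} [MetricSpace X] [MetricSpace Y] (ε : ℝ) (f : X → Y) : Prop :=
  ∀ x x' : X, |dist (f x) (f x') - dist x x'| ≤ ε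

/-- The plane with the `l¹` metric, `d((s,t),(s',t')) = |s−s'| + |t−t'|`. -/
abbrev L1Plane : Type := WithLp 1 (ℝ × ℝ)

/-- The `(2n+1)`-point set `Z_n = ({0,8,…,8n} × {0}) ∪ ({4,12,…,8n−4} × {4})`
in the `l¹` plane. -/
def Zn (n : ℕ) : Set L1Plane :=
  {p | ∃ k : ℕ, k ≤ n ∧ p = (WithLp.equiv 1 (ℝ × ℝ)).symm (8 * (k : ℝ), 0)} ∪
  {p | ∃ k : ℕ, 1 ≤ k ∧ k ≤ n ∧ p = (WithLp.equiv 1 (ℝ × ℝ)).symm (8 * (k : ℝ) - 4, 4)}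

/-!
Order the `2n+1` values of `f` increasingly. Points of `Z_n` are `8` apart, so consecutive values
are at least `8 - ε` apart and the spread of the values is at least `2n(8 - ε)`; on the other hand
`diam Z_n = 8n`, so the spread is at most `8n + ε`. Comparing gives `8n ≤ (2n+1)ε`.
-/

theorem exists_mul_le_sub_of_le_abs_sub {m : ℕ} (g : Fin (m + 1) → ℝ) {a : ℝ}
    (hsep : ∀ i j, i ≠ j → a ≤ |g i - g j|) : ∃ i j, m * a ≤ g i - g j := by
  set σ := Tuple.sort g
  have hmono : Monotone (g ∘ σ) := Tuple.monotone_sort g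
  have hstep : ∀ k : Fin m, a ≤ g (σ k.succ) - g (σ k.castSucc) := by
    intro k
    have hlt : k.castSucc < k.succ := Fin.castSucc_lt_succ
    calc a ≤ |g (σ k.succ) - g (σ k.castSucc)| := hsep _ _ (σ.injective.ne hlt.ne')
      _ = g (σ k.succ) - g (σ k.castSucc) := abs_of_nonneg (sub_nonneg.mpr (hmono hlt.le))
  have hspread : ∀ k : Fin (m + 1), (k : ℕ) * a ≤ g (σ k) - g (σ 0) := by
    refine Fin.induction (by simp) fun k ih => ?_
    have := hstep k
    simp only [Fin.val_succ, Fin.val_castSucc] at ih ⊢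
    push_cast
    linarith
  exact ⟨σ (Fin.last m), σ 0, by simpa using hspread (Fin.last m)⟩

theorem RoughIsom.mul_sub_le_of_separated {X : Type} [MetricSpace X] {ε δ D : ℝ} {f : X → ℝ}
    (hf : RoughIsom ε f) {m : ℕ} (p : Fin (m + 1) → X)
    (hsep : ∀ i j, i ≠ j → δ ≤ dist (p i) (p j)) (hdiam : ∀ i j, dist (p i) (p j) ≤ D) :
    m * (δ - ε) ≤ D + ε := by
  have hrough : ∀ i j, |dist (f (p i)) (f (p j)) - dist (p i) (p j)| ≤ ε := fun i j => hf _ _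
  obtain ⟨i, j, hij⟩ := exists_mul_le_sub_of_le_abs_sub (f ∘ p) (a := δ - ε) fun i j hne => by
    have := (abs_le.mp (hrough i j)).1
    rw [Function.comp_apply, Function.comp_apply, ← Real.dist_eq]
    linarith [hsep i j hne]
  calc (m : ℝ) * (δ - ε) ≤ dist (f (p i)) (f (p j)) := hij.trans (le_abs_self _)
    _ ≤ dist (p i) (p j) + ε := by linarith [(abs_le.mp (hrough i j)).2]
    _ ≤ D + ε := by linarith [hdiam i j]

/-- Lists the points of `Z_n` from left to right, for `i ≤ 2n`. -/
def zigzag (i : ℕ) : L1Plane :=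
  WithLp.toLp 1 (4 * (i : ℝ), 4 * ((i % 2 : ℕ) : ℝ))

theorem zigzag_mem_Zn {n i : ℕ} (hi : i ≤ 2 * n) : zigzag i ∈ Zn n := by
  rcases Nat.even_or_odd' i with ⟨k, rfl | rfl⟩
  · refine Or.inl ⟨k, by omega, ?_⟩
    simp only [zigzag, Nat.mul_mod_right, WithLp.equiv_symm_apply]
    push_cast
    ring_nf
  · refine Or.inr ⟨k + 1, by omega, by omega, ?_⟩
    simp only [zigzag, Nat.mul_add_mod, WithLp.equiv_symm_apply]
    push_cast
    ring_nf

theorem dist_zigzag (i j : ℕ) :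
    dist (zigzag i) (zigzag j) = 4 * ((|(i : ℤ) - j| + |((i % 2 : ℕ) : ℤ) - (j % 2 : ℕ)| : ℤ) : ℝ) := by
  simp only [zigzag, WithLp.prod_dist_eq_of_L1, Real.dist_eq, WithLp.toLp_fst, WithLp.toLp_snd,
    Int.cast_add, Int.cast_abs, Int.cast_sub, Int.cast_natCast, ← mul_sub, abs_mul,
    abs_of_pos (four_pos : (0 : ℝ) < 4)]
  ring

theorem eight_le_dist_zigzag {i j : ℕ} (hij : i ≠ j) : 8 ≤ dist (zigzag i) (zigzag j) := by
  rw [dist_zigzag, show (8 : ℝ) = 4 * ((2 : ℤ) : ℝ) by norm_num]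
  gcongr
  simp only [abs_eq_max_neg]
  omega

theorem dist_zigzag_le {n i j : ℕ} (hi : i ≤ 2 * n) (hj : j ≤ 2 * n) :
    dist (zigzag i) (zigzag j) ≤ 8 * n := by
  rw [dist_zigzag, show (8 * n : ℝ) = 4 * ((2 * n : ℤ) : ℝ) by push_cast; ring]
  gcongr
  simp only [abs_eq_max_neg]
  omega

theorem roughIsom_Zn_lower_bound_general (n : ℕ) (ε : ℝ) (f : Zn n → ℝ)
    (hf : RoughIsom ε f) : 8 * (n : ℝ) / (2 * (n : ℝ) + 1) ≤ ε := by
  have key := hf.mul_sub_le_of_separated (m := 2 * n)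
    (fun i => ⟨zigzag i, zigzag_mem_Zn (i.is_le)⟩)
    (fun i j hij => eight_le_dist_zigzag (Fin.val_injective.ne hij))
    (fun i j => dist_zigzag_le (i.is_le) (j.is_le))
  rw [div_le_iff₀ (by positivity)]
  push_cast at key
  linarith

/-- Any `ε`-roughly isometric map `f : Z_n → ℝ` has `ε ≥ 8n/(2n+1)`. -/
theorem roughIsom_Zn_lower_bound (n : ℕ) (hn : 1 ≤ n) (ε : ℝ) (f : Zn n → ℝ)
    (hf : RoughIsom ε f) : 8 * (n : ℝ) / (2 * (n : ℝ) + 1) ≤ ε :=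
  roughIsom_Zn_lower_bound_general n ε f hf
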